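/- Let g be a nondegenerate symmetric bilinear form on ℝ⁴ with matrix (g_{ab}) and inverse matrix (g^{ab}), and A a linear form with components A_a; write g(y,y) = Σ g_{ab}y^a y^b, A(y) = Σ A_a y^a and g⁻¹(A,A) = Σ g^{ab}A_a A_b. Fix q ∈ ℝ and define L(y) = g(y,y)^{1−q} · A(y)^{2q} on the open set {y : g(y,y) > 0 and A(y) > 0}; let g^L(y) have entries g^L_{ab}(y) = (1/2)∂²L/∂y^a∂y^b(y). Then for every such y, det(g^L(y)) = det(g_{ab}) · (1−q)³ · [ (1+q)A(y)² − q·g⁻¹(A,A)·g(y,y) ] · g(y,y)^{−4q} · A(y)^{−2(1−4q)}. -/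

import Mathlib

noncomputable section

/-- The quadratic form `g(y,y) = Σ g_{ab} y^a y^b` of a 4×4 matrix. -/
def quadForm (g : Matrix (Fin 4) (Fin 4) ℝ) (y : Fin 4 → ℝ) : ℝ :=
  ∑ a, ∑ b, g a b * y a * y b

/-- The linear form `A(y) = Σ A_a y^a`. -/
def linForm (A : Fin 4 → ℝ) (y : Fin 4 → ℝ) : ℝ := ∑ a, A a * y a

/-- `g⁻¹(A,A) = Σ g^{ab} A_a A_b`. -/
def coQuadForm (g : Matrix (Fin 4) (Fin 4) ℝ) (A : Fin 4 → ℝ) : ℝ :=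
  ∑ a, ∑ b, g⁻¹ a b * A a * A b

/-- The L-metric: the matrix `g^L_{ab}(y) = (1/2) ∂²L/∂y^a∂y^b (y)`. -/
def Lmetric (L : (Fin 4 → ℝ) → ℝ) (y : Fin 4 → ℝ) : Matrix (Fin 4) (Fin 4) ℝ :=
  Matrix.of fun a b =>
    (1 / 2) * fderiv ℝ (fun z => fderiv ℝ L z (Pi.single b 1)) y (Pi.single a 1)

/-!
Write `Q = g(y,y)`, `P = A(y)` and `v = g y`. Differentiating twice,
`(1/2) ∂²L = α g + β v⊗v + γ (v⊗A + A⊗v) + δ A⊗A` with `α = (1-q) Q^{-q} P^{2q}`, so the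
L-metric is `α g` plus a rank-two update `Xᵀ C X`, where `X` has rows `v` and `A`. Factoring out
`g` and using `det (α I + U V) = α^{n-2} det (α I + V U)` for `U : n × 2` (an evaluation of
`charpoly_mul_comm_of_le`, hence valid also at `α = 0`, i.e. `q = 1`) leaves `det g · α^{n-2}` times a 2×2 determinant, in which `X` enters
only through the Gram matrix `X g⁻¹ Xᵀ = [[Q, P], [P, g⁻¹(A,A)]]`. This works in every dimension
`n ≥ 2` and gives `det g (1-q)^{n-1} ((1+q) P² - q g⁻¹(A,A) Q) Q^{-nq} P^{2nq-2}`.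
-/

open Matrix Filter Topology

section LinearAlgebra

variable {R m n : Type*} [CommRing R] [Fintype m] [Fintype n] [DecidableEq m] [DecidableEq n]

theorem Matrix.det_smul_one_add_mul_of_card_le (U : Matrix m n R) (V : Matrix n m R)
    (hle : Fintype.card n ≤ Fintype.card m) (t : R) :
    (t • 1 + U * V).det = t ^ (Fintype.card m - Fintype.card n) * (t • 1 + V * U).det := by
  have h := congrArg (Polynomial.eval t) (charpoly_mul_comm_of_le (-U) V hle)
  simpa [eval_charpoly, smul_one_eq_diagonal, scalar_apply, sub_eq_add_neg] using h

theorem Matrix.det_smul_add_mul {g : Matrix m m R} (hg : IsUnit g.det) (U : Matrix m n R)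
    (V : Matrix n m R) (hle : Fintype.card n ≤ Fintype.card m) (t : R) :
    (t • g + U * V).det =
      g.det * t ^ (Fintype.card m - Fintype.card n) * (t • 1 + V * g⁻¹ * U).det := by
  have hfac : t • g + U * V = g * (t • 1 + g⁻¹ * U * V) := by
    simp [mul_add, ← Matrix.mul_assoc, mul_nonsing_inv g hg]
  rw [hfac, det_mul, det_smul_one_add_mul_of_card_le (g⁻¹ * U) V hle, Matrix.mul_assoc V,
    mul_assoc]

end LinearAlgebra

section Calculus

variable {n : Type*} [Fintype n]

def dotProductCLM (v : n → ℝ) : (n → ℝ) →L[ℝ] ℝ :=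
  LinearMap.toContinuousLinearMap (dotProductBilin ℝ ℝ v)

@[simp]
theorem dotProductCLM_apply (v w : n → ℝ) : dotProductCLM v w = v ⬝ᵥ w := rfl

theorem hasFDerivAt_dotProduct_mulVec_self {g : Matrix n n ℝ} (hg : g.IsSymm) (z : n → ℝ) :
    HasFDerivAt (fun y => y ⬝ᵥ g *ᵥ y) (2 • dotProductCLM (g *ᵥ z)) z := by
  have h : HasFDerivAt (fun y => ∑ i, y i * (g *ᵥ y) i)
      (∑ i, (z i • dotProductCLM (g i) + (g *ᵥ z) i • ContinuousLinearMap.proj i)) z :=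
    HasFDerivAt.fun_sum fun i _ =>
      (ContinuousLinearMap.proj i).hasFDerivAt.mul (dotProductCLM (g i)).hasFDerivAt
  refine h.congr_fderiv (ContinuousLinearMap.ext fun e => ?_)
  have hsymm : z ⬝ᵥ g *ᵥ e = (g *ᵥ z) ⬝ᵥ e := by
    rw [dotProduct_mulVec, ← vecMul_transpose, hg.eq]
  simp only [_root_.add_apply, _root_.sum_apply, _root_.smul_apply, dotProductCLM_apply,
    smul_eq_mul, ContinuousLinearMap.proj_apply, Finset.sum_add_distrib, two_smul]
  exact congrArg (· + _) hsymm

end Calculus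

namespace BogoslovskyKropina

section Derivatives

variable {n : Type*} [Fintype n] (g : Matrix n n ℝ) (A : n → ℝ) (q : ℝ)

def domain : Set (n → ℝ) := {y | 0 < y ⬝ᵥ g *ᵥ y ∧ 0 < A ⬝ᵥ y}

def lagrangian (y : n → ℝ) : ℝ :=
  (y ⬝ᵥ g *ᵥ y) ^ (1 - q) * (A ⬝ᵥ y) ^ (2 * q)

def halfGradient (y : n → ℝ) : n → ℝ :=
  ((1 - q) * (y ⬝ᵥ g *ᵥ y) ^ (-q) * (A ⬝ᵥ y) ^ (2 * q)) • g *ᵥ y +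
    (q * (y ⬝ᵥ g *ᵥ y) ^ (1 - q) * (A ⬝ᵥ y) ^ (2 * q - 1)) • A

def halfHessian (y : n → ℝ) : Matrix n n ℝ :=
  ((1 - q) * (y ⬝ᵥ g *ᵥ y) ^ (-q) * (A ⬝ᵥ y) ^ (2 * q)) • g +
    (-2 * q * (1 - q) * (y ⬝ᵥ g *ᵥ y) ^ (-q - 1) * (A ⬝ᵥ y) ^ (2 * q)) •
      vecMulVec (g *ᵥ y) (g *ᵥ y) +
    (2 * q * (1 - q) * (y ⬝ᵥ g *ᵥ y) ^ (-q) * (A ⬝ᵥ y) ^ (2 * q - 1)) •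
      (vecMulVec (g *ᵥ y) A + vecMulVec A (g *ᵥ y)) +
    (q * (2 * q - 1) * (y ⬝ᵥ g *ᵥ y) ^ (1 - q) * (A ⬝ᵥ y) ^ (2 * q - 2)) • vecMulVec A A

theorem isOpen_domain : IsOpen (domain g A) :=
  (isOpen_lt continuous_const (show Continuous fun y : n → ℝ => y ⬝ᵥ g *ᵥ y by fun_prop)).inter
    (isOpen_lt continuous_const (show Continuous fun y : n → ℝ => A ⬝ᵥ y by fun_prop))

variable {g A q}

theorem hasFDerivAt_lagrangian (hg : g.IsSymm) {y : n → ℝ} (hy : y ∈ domain g A) :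
    HasFDerivAt (lagrangian g A q) (2 • dotProductCLM (halfGradient g A q y)) y := by
  have hQ := (hasFDerivAt_dotProduct_mulVec_self hg y).rpow_const (p := 1 - q) (Or.inl hy.1.ne')
  have hP := (dotProductCLM A).hasFDerivAt.rpow_const (x := y) (p := 2 * q) (Or.inl hy.2.ne')
  refine (hQ.mul hP).congr_fderiv (ContinuousLinearMap.ext fun e => ?_)
  simp only [halfGradient, _root_.add_apply, _root_.smul_apply, dotProductCLM_apply, smul_eq_mul,
    nsmul_eq_mul, Nat.cast_ofNat, add_dotProduct, smul_dotProduct, smul_add, sub_sub_cancel_left]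
  ring

theorem hasFDerivAt_halfGradient_apply (hg : g.IsSymm) {y : n → ℝ} (hy : y ∈ domain g A)
    (b : n) :
    HasFDerivAt (fun z => halfGradient g A q z b) (dotProductCLM (halfHessian g A q y b)) y := by
  have hQ := hasFDerivAt_dotProduct_mulVec_self hg y
  have hQ₁ := hQ.rpow_const (p := -q) (Or.inl hy.1.ne')
  have hQ₂ := hQ.rpow_const (p := 1 - q) (Or.inl hy.1.ne')
  have hP₁ := (dotProductCLM A).hasFDerivAt.rpow_const (x := y) (p := 2 * q) (Or.inl hy.2.ne')
  have hP₂ := (dotProductCLM A).hasFDerivAt.rpow_const (x := y) (p := 2 * q - 1)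
    (Or.inl hy.2.ne')
  have hv := (dotProductCLM (g b)).hasFDerivAt (x := y)
  refine ((((hQ₁.const_mul (1 - q)).mul hP₁).mul hv).add
    (((hQ₂.const_mul q).mul hP₂).mul_const (A b))).congr_fderiv
    (ContinuousLinearMap.ext fun e => ?_)
  have hrow : ∀ w, g b ⬝ᵥ w = (g *ᵥ w) b := fun _ => rfl
  change _ = (halfHessian g A q y *ᵥ e) b
  simp only [halfHessian, add_mulVec, smul_mulVec, neg_mulVec, vecMulVec_mulVec, op_smul_eq_smul,
    _root_.add_apply, _root_.smul_apply, Pi.add_apply, Pi.smul_apply, Pi.neg_apply, Pi.mul_apply,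
    dotProductCLM_apply, hrow, smul_eq_mul, nsmul_eq_mul, Nat.cast_ofNat, smul_add, neg_mul,
    mul_neg, neg_smul, sub_sub_cancel_left, show 2 * q - 1 - 1 = 2 * q - 2 by ring]
  ring

theorem fderiv_lagrangian_single_eventuallyEq [DecidableEq n] (hg : g.IsSymm) {y : n → ℝ}
    (hy : y ∈ domain g A) (b : n) :
    (fun z => fderiv ℝ (lagrangian g A q) z (Pi.single b 1)) =ᶠ[𝓝 y]
      fun z => 2 * halfGradient g A q z b := by
  filter_upwards [(isOpen_domain g A).mem_nhds hy] with z hz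
  simp [(hasFDerivAt_lagrangian hg hz).fderiv]

end Derivatives

def hessCoeffs (q Q P : ℝ) : Matrix (Fin 2) (Fin 2) ℝ :=
  !![-2 * q * (1 - q) * Q ^ (-q - 1) * P ^ (2 * q), 2 * q * (1 - q) * Q ^ (-q) * P ^ (2 * q - 1);
    2 * q * (1 - q) * Q ^ (-q) * P ^ (2 * q - 1), q * (2 * q - 1) * Q ^ (1 - q) * P ^ (2 * q - 2)]

theorem pow_mul_det_smul_one_add_hessCoeffs_mul (q : ℝ) {Q P : ℝ} (hQ : 0 < Q) (hP : 0 < P)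
    (K : ℝ) (k : ℕ) :
    ((1 - q) * Q ^ (-q) * P ^ (2 * q)) ^ k *
        (((1 - q) * Q ^ (-q) * P ^ (2 * q)) • 1 + hessCoeffs q Q P * !![Q, P; P, K]).det =
      (1 - q) ^ (k + 1) * ((1 + q) * P ^ 2 - q * K * Q) * Q ^ (-((k + 2) * q)) *
        P ^ (2 * (k + 2) * q - 2) := by
  have hQ₁ : Q ^ (-q - 1) = Q ^ (-q) / Q := Real.rpow_sub_one hQ.ne' _
  have hQ₂ : Q ^ (1 - q) = Q ^ (-q) * Q := by
    rw [← Real.rpow_add_one hQ.ne']; ring_nf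
  have hQ₃ : Q ^ (-((k + 2) * q)) = (Q ^ (-q)) ^ (k + 2) := by
    rw [← Real.rpow_mul_natCast hQ.le]; push_cast; ring_nf
  have hP₁ : P ^ (2 * q - 1) = P ^ (2 * q) / P := Real.rpow_sub_one hP.ne' _
  have hP₂ : P ^ (2 * q - 2) = P ^ (2 * q) / P ^ 2 := by
    exact_mod_cast Real.rpow_sub_natCast hP.ne' (2 * q) 2
  have hP₃ : P ^ (2 * (k + 2) * q - 2) = (P ^ (2 * q)) ^ (k + 2) / P ^ 2 := by
    rw [show 2 * ((k : ℝ) + 2) * q - 2 = 2 * q * ((k + 2 : ℕ) : ℝ) - ((2 : ℕ) : ℝ) by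
      push_cast; ring, Real.rpow_sub_natCast hP.ne', Real.rpow_mul_natCast hP.le]
  rw [det_fin_two, mul_pow, mul_pow]
  simp only [hessCoeffs, Matrix.add_apply, Matrix.smul_apply, mul_apply, Fin.sum_univ_two,
    of_apply, cons_val_zero, cons_val_one, one_apply_eq, one_apply_ne zero_ne_one,
    one_apply_ne one_ne_zero, smul_eq_mul, hQ₁, hQ₂, hQ₃, hP₁, hP₂, hP₃]
  field_simp
  ring

section Determinant

variable {n : Type*} [Fintype n] {g : Matrix n n ℝ} {A : n → ℝ} {q : ℝ}

theorem halfHessian_eq_smul_add_transpose_mul (y : n → ℝ) :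
    halfHessian g A q y = ((1 - q) * (y ⬝ᵥ g *ᵥ y) ^ (-q) * (A ⬝ᵥ y) ^ (2 * q)) • g +
      (of ![g *ᵥ y, A])ᵀ * (hessCoeffs q (y ⬝ᵥ g *ᵥ y) (A ⬝ᵥ y) * of ![g *ᵥ y, A]) := by
  ext a b
  simp only [halfHessian, hessCoeffs, Matrix.add_apply, Matrix.smul_apply, smul_eq_mul,
    vecMulVec_apply, mul_apply, transpose_apply, of_apply, Fin.sum_univ_two, cons_val_zero,
    cons_val_one]
  ring

theorem mul_inv_mul_transpose_eq [DecidableEq n] (hg : g.IsSymm) (hdet : IsUnit g.det)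
    (y : n → ℝ) :
    of ![g *ᵥ y, A] * g⁻¹ * (of ![g *ᵥ y, A])ᵀ =
      !![y ⬝ᵥ g *ᵥ y, A ⬝ᵥ y; A ⬝ᵥ y, A ⬝ᵥ g⁻¹ *ᵥ A] := by
  have hv : g *ᵥ y = y ᵥ* g := by rw [← mulVec_transpose, hg.eq]
  have hinv : g⁻¹ *ᵥ (y ᵥ* g) = y := by
    rw [← hv, mulVec_mulVec, nonsing_inv_mul _ hdet, one_mulVec]
  ext i j
  fin_cases i <;> fin_cases j <;>
    simp [mul_apply, hv, vecMul_vecMul, mul_nonsing_inv _ hdet, ← dotProduct.eq_def,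
      ← dotProduct_mulVec, hinv, dotProduct_comm y A]

theorem det_halfHessian [DecidableEq n] (hg : g.IsSymm) (hdet : IsUnit g.det) {y : n → ℝ}
    (hy : y ∈ domain g A) (hn : 2 ≤ Fintype.card n) :
    (halfHessian g A q y).det =
      g.det * (1 - q) ^ (Fintype.card n - 1) *
        ((1 + q) * (A ⬝ᵥ y) ^ 2 - q * (A ⬝ᵥ g⁻¹ *ᵥ A) * (y ⬝ᵥ g *ᵥ y)) *
        (y ⬝ᵥ g *ᵥ y) ^ (-(Fintype.card n * q)) * (A ⬝ᵥ y) ^ (2 * Fintype.card n * q - 2) := by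
  obtain ⟨k, hk⟩ : ∃ k, Fintype.card n = k + 2 := ⟨_, (Nat.sub_add_cancel hn).symm⟩
  rw [halfHessian_eq_smul_add_transpose_mul, det_smul_add_mul hdet _ _ (by simp [hk]),
    Matrix.mul_assoc _ _ g⁻¹, Matrix.mul_assoc, mul_inv_mul_transpose_eq hg hdet, mul_assoc,
    Fintype.card_fin, hk, Nat.add_sub_cancel,
    pow_mul_det_smul_one_add_hessCoeffs_mul q hy.1 hy.2]
  push_cast
  ring

end Determinant

end BogoslovskyKropina

open BogoslovskyKropina

theorem quadForm_eq_dotProduct_mulVec (g : Matrix (Fin 4) (Fin 4) ℝ) (y : Fin 4 → ℝ) :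
    quadForm g y = y ⬝ᵥ g *ᵥ y := by
  simp only [quadForm, dotProduct, mulVec, Finset.mul_sum]
  exact Finset.sum_congr rfl fun _ _ => Finset.sum_congr rfl fun _ _ => by ring

theorem linForm_eq_dotProduct (A y : Fin 4 → ℝ) : linForm A y = A ⬝ᵥ y := rfl

theorem coQuadForm_eq_dotProduct_mulVec (g : Matrix (Fin 4) (Fin 4) ℝ) (A : Fin 4 → ℝ) :
    coQuadForm g A = A ⬝ᵥ g⁻¹ *ᵥ A := by
  simp only [coQuadForm, dotProduct, mulVec, Finset.mul_sum]
  exact Finset.sum_congr rfl fun _ _ => Finset.sum_congr rfl fun _ _ => by ring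

theorem Lmetric_congr {L L' : (Fin 4 → ℝ) → ℝ} {y : Fin 4 → ℝ} (h : L =ᶠ[𝓝 y] L') :
    Lmetric L y = Lmetric L' y := by
  ext a b
  simp only [Lmetric, of_apply]
  congr 2
  exact Filter.EventuallyEq.fderiv_eq
    ((h.fderiv (𝕜 := ℝ)).mono fun z hz => congrArg (fun D => D (Pi.single b 1)) hz)

theorem Lmetric_lagrangian {g : Matrix (Fin 4) (Fin 4) ℝ} {A : Fin 4 → ℝ} {q : ℝ}
    (hg : g.IsSymm) {y : Fin 4 → ℝ} (hy : y ∈ domain g A) :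
    Lmetric (lagrangian g A q) y = (halfHessian g A q y)ᵀ := by
  ext a b
  rw [Lmetric, of_apply, (fderiv_lagrangian_single_eventuallyEq hg hy b).fderiv_eq,
    ((hasFDerivAt_halfGradient_apply hg hy b).const_mul 2).fderiv]
  simp

/-- Determinant of the L-metric of the Bogoslovsky/Kropina type Lagrangian
`L = g(y,y)^{1−q} A(y)^{2q}` on the set where `g(y,y) > 0` and `A(y) > 0`:
`det g^L = det g · (1−q)³ [(1+q)A(y)² − q g⁻¹(A,A) g(y,y)] g(y,y)^{−4q} A(y)^{−2(1−4q)}`. -/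
theorem bogoslovsky_kropina_det (g : Matrix (Fin 4) (Fin 4) ℝ) (hgs : g.IsSymm)
    (hgdet : g.det ≠ 0) (A : Fin 4 → ℝ) (q : ℝ) (L : (Fin 4 → ℝ) → ℝ)
    (hLdef : ∀ y : Fin 4 → ℝ, 0 < quadForm g y → 0 < linForm A y →
      L y = (quadForm g y) ^ (1 - q) * (linForm A y) ^ (2 * q)) :
    ∀ y : Fin 4 → ℝ, 0 < quadForm g y → 0 < linForm A y →
      (Lmetric L y).det =
        g.det * (1 - q) ^ 3 *
          ((1 + q) * (linForm A y) ^ 2 - q * coQuadForm g A * quadForm g y) *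
          (quadForm g y) ^ (-(4 * q)) * (linForm A y) ^ (-(2 * (1 - 4 * q))) := by
  simp only [quadForm_eq_dotProduct_mulVec, linForm_eq_dotProduct,
    coQuadForm_eq_dotProduct_mulVec] at hLdef ⊢
  intro y hQ hP
  have hy : y ∈ domain g A := ⟨hQ, hP⟩
  have hL : L =ᶠ[𝓝 y] lagrangian g A q :=
    eventually_of_mem ((isOpen_domain g A).mem_nhds hy) fun z hz => hLdef z hz.1 hz.2
  rw [Lmetric_congr hL, Lmetric_lagrangian hgs hy, det_transpose,
    det_halfHessian hgs (isUnit_iff_ne_zero.2 hgdet) hy (by simp), Fintype.card_fin,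
    Nat.cast_ofNat, show (2 * 4 * q - 2 : ℝ) = -(2 * (1 - 4 * q)) by ring]
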